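/- arXiv:2007.02140 — 4 statements merged into one kernel-verified Lean document; each statement's English description precedes it below -/
import Mathlib

section
/- Let X be a smooth projective rational surface with K_X² > 0 and let D be an r-class on X with r ≥ -1. Then h⁰(X, O_X(D)) > 0, i.e. D is effective. -/
/-- On a smooth projective rational surface with `K² > 0`,
every `r`-class `D` with `r ≥ -1` is effective: `h⁰(D) > 0`.
Context facts encoded as hypotheses: `h⁰(-D) = 0`, `-K` effective,
Serre duality, monotonicity of `h⁰` under adding effective divisors,
Riemann–Roch and `χ(O_X) = 1`. -/
theorem r_class_effective {Pic : Type*} [AddCommGroup Pic]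
    (inter : Pic →ₗ[ℤ] Pic →ₗ[ℤ] ℤ)
    (hsymm : ∀ a b : Pic, inter a b = inter b a)
    (K : Pic) (h : ℕ → Pic → ℕ) (chi : Pic → ℤ)
    (hchi : ∀ D : Pic, chi D = (h 0 D : ℤ) - h 1 D + h 2 D)
    (hchiO : chi 0 = 1)
    (hRR : ∀ D : Pic, 2 * chi D = 2 * chi 0 + inter D (D - K))
    (hSerre : ∀ D : Pic, h 2 D = h 0 (K - D))
    (hmono : ∀ D E : Pic, 0 < h 0 E → h 0 D ≤ h 0 (D + E))
    (heffK : 0 < h 0 (-K))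
    (hdeg : 0 < inter K K)
    (r : ℤ) (hr : -1 ≤ r)
    (D : Pic) (hD2 : inter D D = r) (hDK : inter D K = -r - 2)
    (hD0 : h 0 (-D) = 0) :
    0 < h 0 D := by
  -- h²(D) = h⁰(K - D) = 0
  have h2 : h 2 D = 0 := by
    have hle : h 0 (K - D) ≤ h 0 (K - D + -K) := hmono _ _ heffK
    have : K - D + -K = -D := by abel
    rw [this, hD0] at hle
    rw [hSerre]
    omega
  -- χ(D) = r + 2
  have hchiD : chi D = r + 2 := by
    have := hRR D
    rw [hchiO] at this
    have hexp : inter D (D - K) = inter D D - inter D K := by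
      simp [map_sub]
    rw [hexp, hD2, hDK] at this
    omega
  have := hchi D
  rw [h2, hchiD] at this
  omega
end

section
/- Let X be a smooth projective surface with χ(O_X) = 1 and let (A₁, …, A_n) be a toric system on X. Then for any cyclic segment [k,…,l] ⊊ [1,…,n], the divisor A_{k…l} = Σ_{i∈[k,…,l]} A_i is numerically left-orthogonal and satisfies A_{k…l}² + 2 = Σ_{i∈[k,…,l]} (A_i² + 2). -/
/-!
Expanding `(A_k + ⋯ + A_l)²` one summand at a time, each new summand meets the partial sum
only in its left neighbour, so every step adds `A_i² + 2`. On the other hand, writing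
`-K` as the full period `A_{i-1} + A_i + A_{i+1} + ⋯` shows `A_i · (-K) = A_i² + 2`, hence
`S · (-K) = S² + 2` for the segment sum `S`, which by Riemann–Roch and `χ(𝒪_X) = 1` is
exactly `χ(-S) = 0`.
-/

open Finset

theorem Function.Periodic.sum_range_comp_add {M : Type*} [AddCancelCommMonoid M] {f : ℤ → M}
    {n : ℕ} (hf : Function.Periodic f n) (c : ℤ) :
    ∑ i ∈ range n, f (c + i) = ∑ i ∈ range n, f i := by
  have hstep : Function.Periodic (fun c : ℤ => ∑ i ∈ range n, f (c + i)) 1 := by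
    intro c
    have h := (sum_range_succ' (fun i : ℕ => f (c + i)) n).symm.trans
      (sum_range_succ (fun i : ℕ => f (c + i)) n)
    rw [hf c, Nat.cast_zero, add_zero] at h
    simpa only [Nat.cast_succ, add_assoc, add_comm (1 : ℤ)] using add_right_cancel h
  simpa using hstep.int_mul_eq c

theorem Int.not_natCast_dvd_of_pos_of_lt {n : ℕ} {d : ℤ} (h0 : 0 < d) (hd : d < n) :
    ¬(n : ℤ) ∣ d :=
  fun h => absurd (Int.le_of_dvd h0 h) (not_le.2 hd)

theorem chi_neg_eq_zero_iff {M : Type*} [AddCommGroup M] {B : LinearMap.BilinForm ℤ M}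
    {K : M} {chi : M → ℤ} (hchi : chi 0 = 1)
    (hRR : ∀ D : M, 2 * chi D = 2 * chi 0 + B D (D - K)) (D : M) :
    chi (-D) = 0 ↔ B D (-K) = B D D + 2 := by
  have h := hRR (-D)
  simp only [hchi, map_neg, map_sub, LinearMap.neg_apply] at h ⊢
  omega

namespace LinearMap.BilinForm

variable {R M : Type*} [CommRing R] [AddCommGroup M] [Module R M] {B : LinearMap.BilinForm R M}
  {A : ℤ → M} {n : ℕ}

theorem apply_sum_range_add_eq_one (hadj : ∀ i, B (A i) (A (i + 1)) = 1)
    (horth : ∀ i j : ℤ, 2 ≤ j - i → j - i ≤ n - 2 → B (A i) (A j) = 0)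
    (k : ℤ) {m : ℕ} (hm1 : 1 ≤ m) (hm : m + 2 ≤ n) :
    B (∑ j ∈ Finset.range m, A (k + j)) (A (k + m)) = 1 := by
  obtain ⟨p, rfl⟩ : ∃ p, m = p + 1 := ⟨m - 1, by omega⟩
  have hfar : ∀ j ∈ Finset.range p, B (A (k + j)) (A (k + (p + 1 : ℕ))) = 0 := fun j hj => by
    rw [Finset.mem_range] at hj
    exact horth _ _ (by push_cast; omega) (by push_cast; omega)
  rw [map_sum, LinearMap.sum_apply, sum_range_succ, sum_eq_zero hfar, zero_add, Nat.cast_succ,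
    ← add_assoc]
  exact hadj _

theorem apply_sum_range_self_add_two (hB : B.IsSymm) (hadj : ∀ i, B (A i) (A (i + 1)) = 1)
    (horth : ∀ i j : ℤ, 2 ≤ j - i → j - i ≤ n - 2 → B (A i) (A j) = 0)
    (k : ℤ) {m : ℕ} (hm1 : 1 ≤ m) (hm : m < n) :
    B (∑ j ∈ Finset.range m, A (k + j)) (∑ j ∈ Finset.range m, A (k + j)) + 2 =
      ∑ j ∈ Finset.range m, (B (A (k + j)) (A (k + j)) + 2) := by
  induction m, hm1 using Nat.le_induction with
  | base => simp
  | succ m hm1 ih =>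
    have hSa := apply_sum_range_add_eq_one hadj horth k hm1 (by omega : m + 2 ≤ n)
    have haS : B (A (k + m)) (∑ j ∈ Finset.range m, A (k + j)) = 1 := by rw [hB.eq]; exact hSa
    rw [sum_range_succ, sum_range_succ, ← ih (by omega)]
    simp only [map_add, LinearMap.add_apply, hSa, haS]
    ring

theorem apply_sum_range_sub_one_add_eq_self_add_two (hB : B.IsSymm)
    (hadj : ∀ i, B (A i) (A (i + 1)) = 1)
    (horth : ∀ i j : ℤ, 2 ≤ j - i → j - i ≤ n - 2 → B (A i) (A j) = 0)
    (hn : 3 ≤ n) (c : ℤ) :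
    B (A c) (∑ i ∈ Finset.range n, A (c - 1 + i)) = B (A c) (A c) + 2 := by
  have hfar : ∑ i ∈ Ico 3 n, B (A c) (A (c - 1 + i)) = 0 :=
    sum_eq_zero fun i hi => by
      rw [mem_Ico] at hi
      exact horth _ _ (by omega) (by omega)
  have hleft : B (A c) (A (c - 1)) = 1 := by
    rw [hB.eq, ← hadj (c - 1), sub_add_cancel]
  rw [map_sum, Finset.range_eq_Ico, ← sum_Ico_consecutive _ (Nat.zero_le 3) hn, hfar, add_zero,
    ← Finset.range_eq_Ico]
  simp only [sum_range_succ, sum_range_zero, Nat.cast_zero, Nat.cast_one, Nat.cast_ofNat]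
  rw [add_zero, sub_add_cancel, show c - 1 + 2 = c + 1 by ring, hleft, hadj]
  ring

theorem apply_eq_self_add_two (hB : B.IsSymm) (hadj : ∀ i, B (A i) (A (i + 1)) = 1)
    (horth : ∀ i j : ℤ, 2 ≤ j - i → j - i ≤ n - 2 → B (A i) (A j) = 0)
    (hn : 3 ≤ n) (hper : Function.Periodic A n) {D : M} (hsum : ∑ i ∈ Finset.range n, A i = D)
    (c : ℤ) :
    B (A c) D = B (A c) (A c) + 2 := by
  rw [← hsum, ← hper.sum_range_comp_add (c - 1)]
  exact apply_sum_range_sub_one_add_eq_self_add_two hB hadj horth hn c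

theorem sum_range_apply_eq_self_add_two (hB : B.IsSymm) (hadj : ∀ i, B (A i) (A (i + 1)) = 1)
    (horth : ∀ i j : ℤ, 2 ≤ j - i → j - i ≤ n - 2 → B (A i) (A j) = 0)
    (hn : 3 ≤ n) (hper : Function.Periodic A n) {D : M} (hsum : ∑ i ∈ Finset.range n, A i = D)
    (k : ℤ) {m : ℕ} (hm1 : 1 ≤ m) (hm : m < n) :
    B (∑ j ∈ Finset.range m, A (k + j)) D =
      B (∑ j ∈ Finset.range m, A (k + j)) (∑ j ∈ Finset.range m, A (k + j)) + 2 := by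
  rw [apply_sum_range_self_add_two hB hadj horth k hm1 hm, map_sum, LinearMap.sum_apply]
  exact sum_congr rfl fun j _ => apply_eq_self_add_two hB hadj horth hn hper hsum _

end LinearMap.BilinForm

/-- Let `(A₁,…,A_n)` be a toric system on a surface with
`χ(O_X) = 1` (encoded as an `n`-periodic sequence `A : ℤ → Pic` with the
cyclic adjacency/orthogonality/sum conditions). For any proper cyclic
segment, starting at `k` and of length `m` with `1 ≤ m < n`, the sum
`S = A_k + … + A_{k+m-1}` is numerically left-orthogonal (`χ(-S) = 0`)
and `S² + 2 = Σᵢ (Aᵢ² + 2)` over the segment. -/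
theorem toric_system_segment_nlo {Pic : Type*} [AddCommGroup Pic]
    (inter : Pic →ₗ[ℤ] Pic →ₗ[ℤ] ℤ)
    (hsymm : ∀ a b : Pic, inter a b = inter b a)
    (K : Pic) (chi : Pic → ℤ)
    (hchiO : chi 0 = 1)
    (hRR : ∀ D : Pic, 2 * chi D = 2 * chi 0 + inter D (D - K))
    (n : ℕ) (hn : 3 ≤ n)
    (A : ℤ → Pic)
    (hAper : ∀ i : ℤ, A (i + n) = A i)
    (hAadj : ∀ i : ℤ, inter (A i) (A (i + 1)) = 1)
    (hAorth : ∀ i j : ℤ, ¬((n : ℤ) ∣ j - i) → ¬((n : ℤ) ∣ j - i - 1) →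
      ¬((n : ℤ) ∣ j - i + 1) → inter (A i) (A j) = 0)
    (hAsum : ∑ i ∈ Finset.range n, A (i : ℤ) = -K)
    (k : ℤ) (m : ℕ) (hm1 : 1 ≤ m) (hm2 : m < n) :
    chi (-(∑ j ∈ Finset.range m, A (k + (j : ℤ)))) = 0 ∧
    inter (∑ j ∈ Finset.range m, A (k + (j : ℤ)))
          (∑ j ∈ Finset.range m, A (k + (j : ℤ))) + 2 =
      ∑ j ∈ Finset.range m, (inter (A (k + (j : ℤ))) (A (k + (j : ℤ))) + 2) := by
  have hB : LinearMap.BilinForm.IsSymm inter := ⟨hsymm⟩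
  have horth : ∀ i j : ℤ, 2 ≤ j - i → j - i ≤ n - 2 → inter (A i) (A j) = 0 :=
    fun i j h2 hn2 => hAorth i j (Int.not_natCast_dvd_of_pos_of_lt (by omega) (by omega))
      (Int.not_natCast_dvd_of_pos_of_lt (by omega) (by omega))
      (Int.not_natCast_dvd_of_pos_of_lt (by omega) (by omega))
  exact ⟨(chi_neg_eq_zero_iff hchiO hRR _).2 <|
      LinearMap.BilinForm.sum_range_apply_eq_self_add_two hB hAadj horth hn hAper hAsum k hm1 hm2,
    LinearMap.BilinForm.apply_sum_range_self_add_two hB hAadj horth k hm1 hm2⟩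
end

section
/- Every admissible sequence of integers (a₁,…,a_n) of the first kind (i.e. a_i ≥ -2 for all i) has length n ≤ 9. -/
/-- Elementary augmentation of integer sequences: insert `-1` at position
`m` and decrease the two cyclically adjacent entries by `1`. -/
inductive IsAugm : List ℤ → List ℤ → Prop
  | first (x y : ℤ) (mid : List ℤ) :
      IsAugm (x :: (mid ++ [y])) ((-1) :: (x - 1) :: (mid ++ [y - 1]))
  | middle (u v : List ℤ) (x y : ℤ) :
      IsAugm (u ++ x :: y :: v) (u ++ (x - 1) :: (-1) :: (y - 1) :: v)
  | last (x y : ℤ) (mid : List ℤ) :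
      IsAugm (x :: (mid ++ [y])) ((x - 1) :: (mid ++ [y - 1, -1]))

/-- Admissible sequences: obtained from `(0, k, 0, -k)` or `(k, 0, -k, 0)`
by finitely many elementary augmentations. -/
inductive Admissible : List ℤ → Prop
  | base₁ (k : ℤ) : Admissible [0, k, 0, -k]
  | base₂ (k : ℤ) : Admissible [k, 0, -k, 0]
  | step {a b : List ℤ} : Admissible a → IsAugm a b → Admissible b

/-!
Each augmentation adds one entry and only lowers entries (the new one is `-1`), so a
first-kind sequence can only arise from first-kind sequences. Hence all first-kind admissible
sequences are generated level by level from the base sequences with `|k| ≤ 2`, keeping only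
first-kind augmentations, and a computation shows that the level of length `10` is empty.
-/

def decLast : List ℤ → List ℤ
  | [] => []
  | [y] => [y - 1]
  | y :: z :: rest => y :: decLast (z :: rest)

theorem decLast_concat (l : List ℤ) (y : ℤ) : decLast (l ++ [y]) = l ++ [y - 1] := by
  induction l with
  | nil => rfl
  | cons a l ih =>
    cases l with
    | nil => rfl
    | cons b l => simpa [decLast] using ih

def innerAugmentations : List ℤ → List (List ℤ)
  | x :: y :: v =>
    ((x - 1) :: (-1) :: (y - 1) :: v) :: (innerAugmentations (y :: v)).map (x :: ·)
  | _ => []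

theorem mem_innerAugmentations (u v : List ℤ) (x y : ℤ) :
    u ++ (x - 1) :: (-1) :: (y - 1) :: v ∈ innerAugmentations (u ++ x :: y :: v) := by
  induction u with
  | nil => simp [innerAugmentations]
  | cons a u ih =>
    obtain ⟨p, w, hw⟩ : ∃ p w, u ++ x :: y :: v = p :: w := by
      cases u <;> exact ⟨_, _, rfl⟩
    rw [hw] at ih
    rw [List.cons_append, hw, innerAugmentations]
    exact List.mem_cons_of_mem _ (List.mem_map_of_mem ih)

def augmentations : List ℤ → List (List ℤ)
  | x :: y :: v =>
    let c := (x - 1) :: decLast (y :: v)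
    ((-1) :: c) :: (c ++ [-1]) :: innerAugmentations (x :: y :: v)
  | _ => []

theorem augmentations_cons_concat (x y : ℤ) (mid : List ℤ) :
    augmentations (x :: (mid ++ [y])) = ((-1) :: (x - 1) :: (mid ++ [y - 1])) ::
      ((x - 1) :: (mid ++ [y - 1, -1])) :: innerAugmentations (x :: (mid ++ [y])) := by
  cases mid with
  | nil => rfl
  | cons z mid =>
    have h := decLast_concat (z :: mid) y
    simp only [List.cons_append] at h
    simp [augmentations, h]

theorem IsAugm.mem_augmentations {a b : List ℤ} (h : IsAugm a b) : b ∈ augmentations a := by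
  cases h with
  | first x y mid => simp [augmentations_cons_concat]
  | last x y mid => simp [augmentations_cons_concat]
  | middle u v x y =>
    have hu := mem_innerAugmentations u v x y
    obtain ⟨p, q, w, hw⟩ : ∃ p q w, u ++ x :: y :: v = p :: q :: w := by
      rcases u with _ | ⟨_, _ | _⟩ <;> exact ⟨_, _, _, rfl⟩
    rw [hw] at hu ⊢
    exact List.mem_cons_of_mem _ (List.mem_cons_of_mem _ hu)

theorem IsAugm.length_eq {a b : List ℤ} (h : IsAugm a b) : b.length = a.length + 1 := by
  cases h <;> simp +arith

theorem IsAugm.exists_le_of_mem {a b : List ℤ} (h : IsAugm a b) {x : ℤ} (hx : x ∈ a) :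
    ∃ y ∈ b, y ≤ x := by
  cases h with
  | first x' y' mid =>
    simp only [List.mem_cons, List.mem_append, List.not_mem_nil, or_false] at hx
    rcases hx with rfl | hx | rfl
    · exact ⟨x - 1, by simp, by omega⟩
    · exact ⟨x, by simp [hx], le_rfl⟩
    · exact ⟨x - 1, by simp, by omega⟩
  | middle u v x' y' =>
    simp only [List.mem_cons, List.mem_append] at hx
    rcases hx with hx | rfl | rfl | hx
    · exact ⟨x, by simp [hx], le_rfl⟩
    · exact ⟨x - 1, by simp, by omega⟩
    · exact ⟨x - 1, by simp, by omega⟩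
    · exact ⟨x, by simp [hx], le_rfl⟩
  | last x' y' mid =>
    simp only [List.mem_cons, List.mem_append, List.not_mem_nil, or_false] at hx
    rcases hx with rfl | hx | rfl
    · exact ⟨x - 1, by simp, by omega⟩
    · exact ⟨x, by simp [hx], le_rfl⟩
    · exact ⟨x - 1, by simp, by omega⟩

theorem Admissible.four_le_length {a : List ℤ} (h : Admissible a) : 4 ≤ a.length := by
  induction h with
  | base₁ | base₂ => simp
  | step _ hab ih => rw [hab.length_eq]; omega

def IsFirstKind (a : List ℤ) : Prop := ∀ x ∈ a, -2 ≤ x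

instance : DecidablePred IsFirstKind :=
  fun a => inferInstanceAs (Decidable (∀ x ∈ a, -2 ≤ x))

theorem IsFirstKind.of_isAugm {a b : List ℤ} (hab : IsAugm a b) (hb : IsFirstKind b) :
    IsFirstKind a := fun _ hx =>
  let ⟨y, hy, hyx⟩ := hab.exists_le_of_mem hx
  (hb y hy).trans hyx

def firstKindStage : ℕ → List (List ℤ)
  | 0 => [-2, -1, 0, 1, 2].flatMap fun k => [[0, k, 0, -k], [k, 0, -k, 0]]
  | n + 1 => (firstKindStage n).flatMap fun a => (augmentations a).filter (IsFirstKind ·)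

theorem Admissible.mem_firstKindStage {a : List ℤ} (ha : Admissible a) (hfk : IsFirstKind a) :
    a ∈ firstKindStage (a.length - 4) := by
  induction ha with
  | base₁ k | base₂ k =>
    have hlo : -2 ≤ k := hfk k (by simp)
    have hhi : k ≤ 2 := by have := hfk (-k) (by simp); omega
    interval_cases k <;> decide
  | @step a b ha hab ih =>
    rw [hab.length_eq, Nat.sub_add_comm ha.four_le_length, firstKindStage]
    exact List.mem_flatMap.2 ⟨a, ih (hfk.of_isAugm hab),
      List.mem_filter.2 ⟨hab.mem_augmentations, decide_eq_true hfk⟩⟩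

set_option maxRecDepth 100000 in
theorem firstKindStage_six : firstKindStage 6 = [] := by decide +kernel

theorem firstKindStage_eq_nil {n : ℕ} (hn : 6 ≤ n) : firstKindStage n = [] := by
  induction n, hn using Nat.le_induction with
  | base => exact firstKindStage_six
  | succ n _ ih => simp [firstKindStage, ih]

/-- Every admissible sequence of the first kind
(all entries `≥ -2`) has length at most `9`. -/
theorem admissible_first_kind_length_le_nine (a : List ℤ)
    (ha : Admissible a) (hfk : ∀ x ∈ a, -2 ≤ x) :
    a.length ≤ 9 := by
  have hmem := ha.mem_firstKindStage hfk
  by_contra! hlen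
  rw [firstKindStage_eq_nil (by omega)] at hmem
  exact List.not_mem_nil hmem
end

section
/- Let X' be a smooth surface with χ(O_{X'}) = 1, let p: X → X' be the blow-up at a point with exceptional divisor E, and let A' = (A'₁,…,A'_n) be a toric system on X'. Then for each 1 ≤ m ≤ n+1, the augmented sequence augm_{p,m}(A') = (p*A'₁,…,p*A'_{m-2}, p*A'_{m-1} - E, E, p*A'_m - E, p*A'_{m+1},…, p*A'_n) (with the evident boundary conventions for m = 1 and m = n+1) is a toric system on X. -/
/-!
Write `B` for the augmented sequence. Away from the index `m` every `B_i` is a pullback `p*A'_j`,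
possibly minus `E`, and pairings of such classes are computed by
`(p*D - aE)·(p*D' - bE) = D·D' - ab` and `E·(p*D - bE) = b`. The only new adjacencies are the
ones with `E`, each of which pairs `E` with a class containing `-E` exactly once; the only new
non-adjacent pair is `p*A'_{m-1} - E, p*A'_m - E`, whose pairing is `1 - 1 = 0`. Finally the sum
gains `E - 2E = -E`, which is the change `K_X = p*K_{X'} + E` of the canonical class.
-/

open Finset Function

namespace Function.Periodic

lemma apply_eq_of_dvd_sub {α : Type*} {f : ℤ → α} {N : ℤ} (hf : Periodic f N) {i j : ℤ}
    (h : N ∣ i - j) : f i = f j := by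
  obtain ⟨k, hk⟩ := h
  rw [show i = j + k * N by linarith]
  simpa using hf.int_mul k j

lemma sum_range_add {M : Type*} [AddCancelCommMonoid M] {f : ℤ → M} {N : ℕ}
    (hf : Periodic f N) (t : ℤ) : ∑ i ∈ range N, f (t + i) = ∑ i ∈ range N, f i := by
  have step : ∀ s : ℤ, ∑ i ∈ range N, f (s + 1 + i) = ∑ i ∈ range N, f (s + i) := by
    intro s
    have h := (sum_range_succ (fun i : ℕ => f (s + i)) N).symm.trans
      (sum_range_succ' (fun i : ℕ => f (s + i)) N)
    simp only [hf s, Nat.cast_add, Nat.cast_one, Nat.cast_zero, add_zero] at h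
    rw [add_right_cancel h]
    exact sum_congr rfl fun i _ => congrArg f (by ring)
  induction t using Int.induction_on with
  | zero => simp
  | succ k ih => rw [step, ih]
  | pred k ih => rw [← step, sub_add_cancel, ih]

end Function.Periodic

section

variable {M : Type*} [AddCommGroup M] {β : M →ₗ[ℤ] M →ₗ[ℤ] ℤ}

lemma apply_sub_smul_sub_smul {x y E : M} (hxE : β x E = 0) (hEy : β E y = 0)
    (hEE : β E E = -1) (a b : ℤ) : β (x - a • E) (y - b • E) = β x y - a * b := by
  simp only [map_sub, map_smul, LinearMap.sub_apply, LinearMap.smul_apply, smul_eq_mul, hxE, hEy,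
    hEE]
  ring

lemma apply_self_sub_smul {y E : M} (hEy : β E y = 0) (hEE : β E E = -1) (b : ℤ) :
    β E (y - b • E) = b := by
  simp only [map_sub, map_smul, smul_eq_mul, hEy, hEE]
  ring

/-- The intersection conditions of a toric system `(A₁, …, A_N)`, with the indices read modulo `N`
(the condition `∑ Aᵢ = -K` is kept separate). -/
structure IsToricChain (β : M →ₗ[ℤ] M →ₗ[ℤ] ℤ) (N : ℤ) (A : ℤ → M) : Prop where
  periodic : Periodic A N
  apply_succ : ∀ i, β (A i) (A (i + 1)) = 1
  apply_of_not_adjacent :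
    ∀ i j, ¬N ∣ j - i → ¬N ∣ j - i - 1 → ¬N ∣ j - i + 1 → β (A i) (A j) = 0

namespace IsToricChain

variable {N : ℤ} {A : ℤ → M}

lemma comp {M' : Type*} [AddCommGroup M'] {β' : M' →ₗ[ℤ] M' →ₗ[ℤ] ℤ} {A : ℤ → M'}
    (hA : IsToricChain β' N A) (p : M' → M) (hp : ∀ x y, β (p x) (p y) = β' x y) :
    IsToricChain β N (p ∘ A) where
  periodic := hA.periodic.comp p
  apply_succ i := (hp _ _).trans (hA.apply_succ i)
  apply_of_not_adjacent i j h₀ h₁ h₂ := (hp _ _).trans (hA.apply_of_not_adjacent i j h₀ h₁ h₂)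

lemma apply_add_sub_one (hβ : ∀ x y, β x y = β y x) (hA : IsToricChain β N A) (i : ℤ) :
    β (A i) (A (i + (N - 1))) = 1 := by
  rw [hβ, ← hA.periodic i, show i + N = i + (N - 1) + 1 by ring, hA.apply_succ]

lemma apply_eq_zero_of_two_le_sub (hA : IsToricChain β N A) {i j : ℤ} (h₂ : 2 ≤ j - i)
    (h₃ : j - i ≤ N - 2) : β (A i) (A j) = 0 := by
  have not_dvd : ∀ x, 0 < x → x < N → ¬N ∣ x := fun x h₀ h₁ h =>
    absurd (Int.le_of_dvd h₀ h) (by omega)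
  exact hA.apply_of_not_adjacent i j (not_dvd _ (by omega) (by omega))
    (not_dvd _ (by omega) (by omega)) (not_dvd _ (by omega) (by omega))

theorem of_window (hβ : ∀ x y, β x y = β y x) (hN : 0 < N) {B : ℤ → M} (hB : Periodic B N)
    (m : ℤ) (hadj : ∀ r, 0 ≤ r → r < N → β (B (m + r)) (B (m + r + 1)) = 1)
    (horth : ∀ r s, 0 ≤ r → s < N → 2 ≤ s - r → s - r ≤ N - 2 →
      β (B (m + r)) (B (m + s)) = 0) :
    IsToricChain β N B := by
  have hr₀ : ∀ i, 0 ≤ (i - m) % N := fun i => Int.emod_nonneg _ hN.ne'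
  have hrN : ∀ i, (i - m) % N < N := fun i => Int.emod_lt_of_pos _ hN
  have hwin : ∀ i, N ∣ i - (m + (i - m) % N) := fun i => by
    rw [sub_add_eq_sub_sub]; exact Int.dvd_self_sub_emod
  refine ⟨hB, fun i => ?_, fun i j h₀ h₁ h₂ => ?_⟩
  · rw [hB.apply_eq_of_dvd_sub (i := i + 1) (j := m + (i - m) % N + 1),
      hB.apply_eq_of_dvd_sub (hwin i)]
    · exact hadj _ (hr₀ i) (hrN i)
    · rw [add_sub_add_right_eq_sub]; exact hwin i
  · set r := (i - m) % N
    set d := (j - i) % N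
    have hdj : N ∣ j - i - d := Int.dvd_self_sub_emod
    have hd₀ : d ≠ 0 := fun h => h₀ (by simpa [h] using hdj)
    have hd₁ : d ≠ 1 := fun h => h₁ (by simpa [h] using hdj)
    have hd₂ : d ≠ N - 1 := fun h => h₂ <| by
      rw [show j - i + 1 = j - i - d + N by rw [h]; ring]; exact dvd_add hdj dvd_rfl
    have hdN : d < N := Int.emod_lt_of_pos _ hN
    have hd_nonneg : 0 ≤ d := Int.emod_nonneg _ hN.ne'
    have hBj : B j = B (m + (r + d)) := hB.apply_eq_of_dvd_sub <| by
      rw [show j - (m + (r + d)) = i - (m + r) + (j - i - d) by ring]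
      exact dvd_add (hwin i) hdj
    rw [hB.apply_eq_of_dvd_sub (hwin i), hBj]
    by_cases hwrap : r + d < N
    · exact horth r (r + d) (hr₀ i) hwrap (by omega) (by omega)
    · rw [hβ, ← hB.sub_eq (m + (r + d)), show m + (r + d) - N = m + (r + d - N) by ring]
      exact horth _ r (by omega) (hrN i) (by omega) (by omega)

end IsToricChain

/-- `B` is the augmentation `augm_{p,m}` of `A`, where `A` already stands for the pullbacks
`p*A'ᵢ`. -/
structure IsAugmentation (A : ℤ → M) (E : M) (n : ℕ) (m : ℤ) (B : ℤ → M) : Prop where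
  periodic : Periodic B (n + 1)
  apply_center : B m = E
  apply_pred : B (m - 1) = A (m - 1) - E
  apply_succ : B (m + 1) = A m - E
  apply_add : ∀ j : ℕ, 2 ≤ j → (j : ℤ) ≤ n - 1 → B (m + j) = A (m + j - 1)

namespace IsAugmentation

variable {A B : ℤ → M} {E : M} {n : ℕ} {m : ℤ}

lemma apply_add_eq (hB : IsAugmentation A E n m B) (hA : Periodic A n) {r : ℤ} (h₁ : 1 ≤ r)
    (h₂ : r ≤ n) : B (m + r) = A (m + r - 1) - (if r = 1 ∨ r = n then 1 else 0 : ℤ) • E := by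
  rcases (show r = 1 ∨ r = n ∨ 2 ≤ r ∧ r ≤ n - 1 by omega) with rfl | rfl | ⟨hr₂, hr₃⟩
  · simp [hB.apply_succ]
  · rw [if_pos (Or.inr rfl), one_smul, show m + n = m - 1 + (n + 1) by ring, hB.periodic,
      hB.apply_pred, show m - 1 + (n + 1) - 1 = m - 1 + n by ring, hA]
  · lift r to ℕ using (by omega)
    rw [if_neg (by omega), zero_smul, sub_zero]
    exact hB.apply_add r (by omega) hr₃

theorem isToricChain (hβ : ∀ x y, β x y = β y x) (hn : 3 ≤ n) (hA : IsToricChain β n A)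
    (hAE : ∀ i, β (A i) E = 0) (hEE : β E E = -1) (hB : IsAugmentation A E n m B) :
    IsToricChain β (n + 1) B := by
  have hEA : ∀ i, β E (A i) = 0 := fun i => (hβ _ _).trans (hAE i)
  have hval := fun r => hB.apply_add_eq hA.periodic (r := r)
  refine .of_window hβ (by omega) hB.periodic m (fun r h₀ hr => ?_)
    (fun r s h₀ hs h₂ h₃ => ?_)
  · rcases (show r = 0 ∨ r = n ∨ 1 ≤ r ∧ r ≤ n - 1 by omega) with rfl | rfl | ⟨h₁, h₂⟩
    · rw [add_zero, hB.apply_center, hval 1 le_rfl (by omega), apply_self_sub_smul (hEA _) hEE,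
        if_pos (Or.inl rfl)]
    · rw [add_assoc, hB.periodic, hB.apply_center, hval n (by omega) le_rfl, hβ,
        apply_self_sub_smul (hEA _) hEE, if_pos (Or.inr rfl)]
    · have hadj := hA.apply_succ (m + r - 1)
      rw [show m + r - 1 + 1 = m + (r + 1) - 1 by ring] at hadj
      rw [add_assoc, hval r h₁ (by omega), hval (r + 1) (by omega) (by omega),
        apply_sub_smul_sub_smul (hAE _) (hEA _) hEE, hadj]
      split_ifs <;> omega
  · rcases (show r = 0 ∨ r = 1 ∧ s = n ∨ 1 ≤ r ∧ s - r ≤ n - 2 by omega)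
      with rfl | ⟨rfl, rfl⟩ | ⟨h₁, h₄⟩
    · rw [add_zero, hB.apply_center, hval s (by omega) (by omega),
        apply_self_sub_smul (hEA _) hEE, if_neg (by omega)]
    -- the one pair that is adjacent for `A` but not for `B`
    · rw [hval 1 le_rfl (by omega), hval n (by omega) le_rfl,
        apply_sub_smul_sub_smul (hAE _) (hEA _) hEE, if_pos (Or.inl rfl), if_pos (Or.inr rfl),
        add_sub_cancel_right, show m + n - 1 = m + (n - 1) by ring, hA.apply_add_sub_one hβ]
      norm_num
    · rw [hval r h₁ (by omega), hval s (by omega) (by omega),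
        apply_sub_smul_sub_smul (hAE _) (hEA _) hEE,
        hA.apply_eq_zero_of_two_le_sub (by omega) (by omega)]
      split_ifs <;> omega

theorem sum_range (hB : IsAugmentation A E n m B) (hA : Periodic A n) (hn : 2 ≤ n) :
    ∑ i ∈ range (n + 1), B i = ∑ i ∈ range n, A i - E := by
  have hmult : ∑ i ∈ range n, (if (i : ℤ) + 1 = 1 ∨ (i : ℤ) + 1 = n then 1 else 0 : ℤ) = 2 := by
    rw [sum_boole, show (range n).filter _ = {0, n - 1} by ext i; simp; omega,
      card_pair (by omega)]
    rfl
  have hBper : Periodic B ((n + 1 : ℕ) : ℤ) := by exact_mod_cast hB.periodic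
  calc ∑ i ∈ range (n + 1), B i
      = ∑ i ∈ range (n + 1), B (m + i) := (hBper.sum_range_add m).symm
    _ = ∑ i ∈ range n,
          (A (m + i) - (if (i : ℤ) + 1 = 1 ∨ (i : ℤ) + 1 = n then 1 else 0 : ℤ) • E) + E := by
        rw [sum_range_succ', Nat.cast_zero, add_zero, hB.apply_center]
        refine congrArg (· + E) (sum_congr rfl fun i hi => ?_)
        have hi : (i : ℤ) < n := by exact_mod_cast mem_range.mp hi
        rw [Nat.cast_succ, hB.apply_add_eq hA (by omega) (by omega), ← add_assoc,
          add_sub_cancel_right]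
    _ = ∑ i ∈ range n, A i - E := by
        rw [sum_sub_distrib, ← sum_smul, hmult, hA.sum_range_add m, two_smul]
        abel

end IsAugmentation

end

theorem augmentation_is_toric_system_general {Pic' Pic : Type*}
    [AddCommGroup Pic'] [AddCommGroup Pic]
    (inter' : Pic' →ₗ[ℤ] Pic' →ₗ[ℤ] ℤ) (inter : Pic →ₗ[ℤ] Pic →ₗ[ℤ] ℤ)
    (hsymm : ∀ a b : Pic, inter a b = inter b a)
    (K' : Pic') (p : Pic' →+ Pic) (E : Pic)
    (hpull : ∀ D D' : Pic', inter (p D) (p D') = inter' D D')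
    (hpE : ∀ D : Pic', inter (p D) E = 0)
    (hEE : inter E E = -1)
    (n : ℕ) (hn : 3 ≤ n)
    (A : ℤ → Pic')
    (hAper : ∀ i : ℤ, A (i + n) = A i)
    (hAadj : ∀ i : ℤ, inter' (A i) (A (i + 1)) = 1)
    (hAorth : ∀ i j : ℤ, ¬((n : ℤ) ∣ j - i) → ¬((n : ℤ) ∣ j - i - 1) →
      ¬((n : ℤ) ∣ j - i + 1) → inter' (A i) (A j) = 0)
    (hAsum : ∑ i ∈ Finset.range n, A (i : ℤ) = -K')
    (m : ℤ)
    (B : ℤ → Pic)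
    (hBper : ∀ i : ℤ, B (i + ((n : ℤ) + 1)) = B i)
    (hBm : B m = E)
    (hBprev : B (m - 1) = p (A (m - 1)) - E)
    (hBnext : B (m + 1) = p (A m) - E)
    (hBrest : ∀ j : ℕ, 2 ≤ j → (j : ℤ) ≤ (n : ℤ) - 1 →
      B (m + (j : ℤ)) = p (A (m + (j : ℤ) - 1))) :
    (∀ i : ℤ, inter (B i) (B (i + 1)) = 1) ∧
    (∀ i j : ℤ, ¬(((n : ℤ) + 1) ∣ j - i) → ¬(((n : ℤ) + 1) ∣ j - i - 1) →
      ¬(((n : ℤ) + 1) ∣ j - i + 1) → inter (B i) (B j) = 0) ∧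
    (∑ i ∈ Finset.range (n + 1), B (i : ℤ) = -(p K' + E)) := by
  have hA : IsToricChain inter n (p ∘ A) := IsToricChain.comp ⟨hAper, hAadj, hAorth⟩ p hpull
  have hB : IsAugmentation (p ∘ A) E n m B := ⟨hBper, hBm, hBprev, hBnext, hBrest⟩
  obtain ⟨-, hadj, horth⟩ := hB.isToricChain hsymm hn hA (fun i => hpE (A i)) hEE
  refine ⟨hadj, horth, ?_⟩
  rw [hB.sum_range hA.periodic (by omega), comp_def, ← map_sum, hAsum, map_neg, neg_add']

/-- Let `p : X → X'` be the blow-up of a point on a surface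
`X'` with `χ(O_{X'}) = 1`, with exceptional divisor `E`, so that
`p*D·p*D' = D·D'`, `p*D·E = 0`, `E² = -1` and `K_X = p*K_{X'} + E`.
If `A' = (A'₁,…,A'_n)` is a toric system on `X'` (encoded as an
`n`-periodic sequence), then for each `1 ≤ m ≤ n + 1` the augmented
sequence `augm_{p,m}(A')` — the `(n+1)`-periodic sequence `B` with
`B_m = E`, `B_{m-1} = p*A'_{m-1} - E`, `B_{m+1} = p*A'_m - E` and
`B_{m+j} = p*A'_{m+j-1}` for `2 ≤ j ≤ n - 1` (this uniform cyclic
description incorporates the evident boundary conventions for `m = 1`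
and `m = n + 1`) — is a toric system on `X`. -/
theorem augmentation_is_toric_system {Pic' Pic : Type*}
    [AddCommGroup Pic'] [AddCommGroup Pic]
    (inter' : Pic' →ₗ[ℤ] Pic' →ₗ[ℤ] ℤ) (inter : Pic →ₗ[ℤ] Pic →ₗ[ℤ] ℤ)
    (hsymm' : ∀ a b : Pic', inter' a b = inter' b a)
    (hsymm : ∀ a b : Pic, inter a b = inter b a)
    (K' : Pic') (p : Pic' →+ Pic) (E : Pic)
    (hpull : ∀ D D' : Pic', inter (p D) (p D') = inter' D D')
    (hpE : ∀ D : Pic', inter (p D) E = 0)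
    (hEE : inter E E = -1)
    (n : ℕ) (hn : 3 ≤ n)
    (A : ℤ → Pic')
    (hAper : ∀ i : ℤ, A (i + n) = A i)
    (hAadj : ∀ i : ℤ, inter' (A i) (A (i + 1)) = 1)
    (hAorth : ∀ i j : ℤ, ¬((n : ℤ) ∣ j - i) → ¬((n : ℤ) ∣ j - i - 1) →
      ¬((n : ℤ) ∣ j - i + 1) → inter' (A i) (A j) = 0)
    (hAsum : ∑ i ∈ Finset.range n, A (i : ℤ) = -K')
    (m : ℤ) (hm1 : 1 ≤ m) (hm2 : m ≤ (n : ℤ) + 1)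
    (B : ℤ → Pic)
    (hBper : ∀ i : ℤ, B (i + ((n : ℤ) + 1)) = B i)
    (hBm : B m = E)
    (hBprev : B (m - 1) = p (A (m - 1)) - E)
    (hBnext : B (m + 1) = p (A m) - E)
    (hBrest : ∀ j : ℕ, 2 ≤ j → (j : ℤ) ≤ (n : ℤ) - 1 →
      B (m + (j : ℤ)) = p (A (m + (j : ℤ) - 1))) :
    (∀ i : ℤ, inter (B i) (B (i + 1)) = 1) ∧
    (∀ i j : ℤ, ¬(((n : ℤ) + 1) ∣ j - i) → ¬(((n : ℤ) + 1) ∣ j - i - 1) →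
      ¬(((n : ℤ) + 1) ∣ j - i + 1) → inter (B i) (B j) = 0) ∧
    (∑ i ∈ Finset.range (n + 1), B (i : ℤ) = -(p K' + E)) :=
  augmentation_is_toric_system_general inter' inter hsymm K' p E hpull hpE hEE n hn A hAper hAadj
    hAorth hAsum m B hBper hBm hBprev hBnext hBrest
end
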